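/- arXiv:2307.08330 — 5 statements merged into one kernel-verified Lean document; each statement's English description precedes it below -/
import Mathlib

section
/- Fix d ≥ 3. Represent bipartite vectors in ℂ^d ⊗ ℂ^d as d×d complex matrices, with ⟨ψ|(E ⊗ I)|φ⟩ = tr(Ψᴴ E Φ) for a d×d matrix E. Let Φ₀ be the matrix of |00⟩ − |12⟩, let Φᵢ (1 ≤ i ≤ d−1) be the matrix of |i0⟩ − |0i⟩, and let Σ be the all-ones matrix (the stopper state). If a d×d complex matrix E satisfies tr(Ψᴴ E Φ) = 0 for every pair of distinct states Ψ ≠ Φ from the set {Φ₀, Φ₁, …, Φ_{d−1}, Σ}, then E = c·I for some c ∈ ℂ. -/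
open Matrix

/-- Coefficient matrix of the basis vector `|i⟩⊗|j⟩` in `ℂ^{d₁} ⊗ ℂ^{d₂}`. -/
noncomputable def ket (d₁ d₂ : ℕ) (i j : ℕ) : Matrix (Fin d₁) (Fin d₂) ℂ :=
  fun a b => if (a : ℕ) = i ∧ (b : ℕ) = j then 1 else 0

/-- The `d+1` states of Theorem 1 in `ℂ^d ⊗ ℂ^d`: index `0` is `|00⟩ − |12⟩`,
index `i` with `1 ≤ i ≤ d−1` is `|i0⟩ − |0i⟩`, and index `d` is the stopper
state (all-ones coefficient matrix). -/
noncomputable def stateDD (d : ℕ) (i : ℕ) : Matrix (Fin d) (Fin d) ℂ :=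
  if i = 0 then ket d d 0 0 - ket d d 1 2
  else if i < d then ket d d i 0 - ket d d 0 i
  else fun _ _ => 1

/-! With matrix units `E_ab`, `tr (E_abᴴ * (E * E_ce)) = δ_be E_ac`. Orthogonality of
`|i0⟩ − |0i⟩` and `|j0⟩ − |0j⟩` then kills `E_ij` for distinct nonzero `i, j`, and pairing
`|j0⟩ − |0j⟩` with `|00⟩ − |12⟩` kills the first row and column: the `|12⟩` term only ties
`E_02` to `E_10` and `E_20` to `E_01`, which vanish first. Finally the stopper against
`|j0⟩ − |0j⟩` equates the `j`-th and `0`-th column sums of `E`, which for diagonal `E` are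
`E_jj` and `E_00`. -/

namespace Matrix

variable {n R : Type*} [Fintype n] [DecidableEq n] [Ring R]

theorem trace_single_mul_mul_single (E : Matrix n n R) (a b c e : n) :
    trace (single a b 1 * (E * single c e 1)) = if a = e then E b c else 0 := by
  rw [trace_single_mul, one_smul]
  split_ifs with h
  · rw [h, mul_single_apply_same, mul_one]
  · exact mul_single_apply_of_ne (hbj := h) ..

variable [StarRing R]

theorem trace_conjTranspose_ones_mul_mul_single (E : Matrix n n R) (c e : n) :
    trace ((of fun _ _ => (1 : R))ᴴ * (E * single c e 1)) = ∑ a, E a c := by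
  simp only [trace, diag, mul_apply, conjTranspose_apply, of_apply, star_one, one_mul]
  rw [Finset.sum_comm]
  simp [single, ite_and]

theorem isDiag_of_trace_antisymm_eq_zero {o p q : n} (hpo : p ≠ o) (hqo : q ≠ o) (hpq : p ≠ q)
    {E : Matrix n n R}
    (hΦΦ : ∀ i j, i ≠ o → j ≠ o → i ≠ j →
      trace ((single i o 1 - single o i 1)ᴴ * (E * (single j o 1 - single o j 1))) = 0)
    (hΦ₀Φ : ∀ j, j ≠ o →
      trace ((single o o 1 - single p q 1)ᴴ * (E * (single j o 1 - single o j 1))) = 0)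
    (hΦΦ₀ : ∀ j, j ≠ o →
      trace ((single j o 1 - single o j 1)ᴴ * (E * (single o o 1 - single p q 1))) = 0) :
    E.IsDiag := by
  have row (j : n) (hj : j ≠ o) : E o j + (if q = j then E p o else 0) = 0 := by
    simpa [conjTranspose_sub, mul_sub, sub_mul, trace_sub,
      trace_single_mul_mul_single, hj.symm, hqo] using hΦ₀Φ j hj
  have col (j : n) (hj : j ≠ o) : E j o + (if j = q then E o p else 0) = 0 := by
    simpa [conjTranspose_sub, mul_sub, sub_mul, trace_sub,
      trace_single_mul_mul_single, hj, hqo.symm] using hΦΦ₀ j hj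
  have hpo' : E p o = 0 := by simpa [hpq] using col p hpo
  have hop' : E o p = 0 := by simpa [hpq.symm] using row p hpo
  intro i j hij
  by_cases hi : i = o
  · subst hi
    simpa [hpo'] using row j (Ne.symm hij)
  by_cases hj : j = o
  · subst hj
    simpa [hop'] using col i hij
  simpa [conjTranspose_sub, mul_sub, sub_mul, trace_sub,
      trace_single_mul_mul_single, hi, hj, hij, Ne.symm hi, Ne.symm hj]
    using hΦΦ i j hi hj hij

theorem eq_smul_one_of_isDiag_of_trace_ones {o : n} {E : Matrix n n R} (hE : E.IsDiag)
    (h : ∀ j, j ≠ o →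
      trace ((of fun _ _ => (1 : R))ᴴ * (E * (single j o 1 - single o j 1))) = 0) :
    E = E o o • 1 := by
  have colSum (c : n) : ∑ a, E a c = E c c :=
    Finset.sum_eq_single c (fun a _ hac => hE hac) (by simp)
  have diag (j : n) : E j j = E o o := by
    by_cases hj : j = o
    · rw [hj]
    · simpa [mul_sub, trace_sub, trace_conjTranspose_ones_mul_mul_single, colSum, sub_eq_zero]
        using h j hj
  ext i j
  by_cases hij : i = j
  · simp [hij, diag]
  · simp [hij, hE hij]

end Matrix

theorem ket_eq_single {d : ℕ} (a b : Fin d) : ket d d a b = single a b 1 := by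
  ext x y
  simp [ket, single, Fin.ext_iff, eq_comm]

theorem stateDD_zero {d : ℕ} (hd : 3 ≤ d) :
    stateDD d 0 = single ⟨0, by omega⟩ ⟨0, by omega⟩ 1 - single ⟨1, by omega⟩ ⟨2, hd⟩ 1 := by
  rw [stateDD, if_pos rfl, ← ket_eq_single, ← ket_eq_single]

theorem stateDD_val_of_ne_zero {d : ℕ} (h0 : 0 < d) {i : Fin d} (hi : i ≠ ⟨0, h0⟩) :
    stateDD d i = single i ⟨0, h0⟩ 1 - single ⟨0, h0⟩ i 1 := by
  simp [stateDD, Fin.val_ne_iff.2 hi, ← ket_eq_single]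

theorem stateDD_self {d : ℕ} (h0 : 0 < d) : stateDD d d = of fun _ _ => 1 := by
  simp [stateDD, h0.ne']
  rfl

theorem alice_trivial_dd (d : ℕ) (hd : 3 ≤ d) (E : Matrix (Fin d) (Fin d) ℂ)
    (hE : ∀ i j : ℕ, i ≤ d → j ≤ d → i ≠ j →
      Matrix.trace ((stateDD d i)ᴴ * (E * stateDD d j)) = 0) :
    ∃ c : ℂ, E = c • (1 : Matrix (Fin d) (Fin d) ℂ) := by
  have h0 : 0 < d := by omega
  have h1 : 1 < d := by omega
  have hdiag : E.IsDiag := by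
    refine isDiag_of_trace_antisymm_eq_zero (o := ⟨0, h0⟩) (p := ⟨1, h1⟩) (q := ⟨2, hd⟩)
      (by simp) (by simp) (by simp) (fun i j hi hj hij => ?_) (fun j hj => ?_) (fun j hj => ?_)
    · simpa [stateDD_val_of_ne_zero h0 hi, stateDD_val_of_ne_zero h0 hj]
        using hE i j i.isLt.le j.isLt.le (Fin.val_ne_iff.2 hij)
    · simpa [stateDD_zero hd, stateDD_val_of_ne_zero h0 hj]
        using hE 0 j h0.le j.isLt.le (Fin.val_ne_iff.2 hj).symm
    · simpa [stateDD_zero hd, stateDD_val_of_ne_zero h0 hj]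
        using hE j 0 j.isLt.le h0.le (Fin.val_ne_iff.2 hj)
  refine ⟨_, eq_smul_one_of_isDiag_of_trace_ones (o := ⟨0, h0⟩) hdiag fun j hj => ?_⟩
  simpa [stateDD_self h0, stateDD_val_of_ne_zero h0 hj] using hE d j le_rfl j.isLt.le j.isLt.ne'
end

section
/- Let 3 ≤ d₁ ≤ d₂. Represent vectors in ℂ^{d₁} ⊗ ℂ^{d₂} as d₁×d₂ complex matrices, with the second-party action (I ⊗ E) sending Φ to Φ Eᵀ for E a d₂×d₂ matrix. Let S be the set consisting of the matrices of |00⟩ − |12⟩, of |i0⟩ − |0i⟩ for 1 ≤ i ≤ d₁−1, of |0j⟩ − |2,(j−1)⟩ for d₁ ≤ j ≤ d₂−1, and the all-ones d₁×d₂ matrix. If a d₂×d₂ complex matrix E satisfies tr(Ψᴴ Φ Eᵀ) = 0 for all distinct Ψ, Φ ∈ S, then E = c·I for some c ∈ ℂ. -/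
/-!
Since `⟨p q|(I ⊗ E)|r s⟩ = δ_{pr} E_{qs}`, it pays to write the `q`-th state, `q < d₂`, uniformly
as `±(|0 q⟩ - |a_q b_q⟩)` with `a_q ≠ 0` (`a = partnerRow`, `b = partnerCol`). Orthogonality
of the states `q ≠ s` then reads `E_{qs} + δ_{a_q a_s} E_{b_q b_s} = 0`, and as `b_q < q` for
`q ≠ 0`, an induction kills every off-diagonal entry. Orthogonality to the all-ones state
equates the row sums of rows `q` and `b_q`, i.e. `E_{qq} = E_{b_q b_q}`, and descending along
`b` shows the diagonal is constant.
-/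

open Matrix

/-- The `d₂+1` states of Theorem 2 in `ℂ^{d₁} ⊗ ℂ^{d₂}` (Eq. (5)): index `0` is
`|00⟩ − |12⟩`; index `i` with `1 ≤ i ≤ d₁−1` is `|i0⟩ − |0i⟩`; index `j` with
`d₁ ≤ j ≤ d₂−1` is `|0j⟩ − |2,(j−1)⟩`; index `d₂` is the stopper (all-ones). -/
noncomputable def stateD12 (d₁ d₂ : ℕ) (i : ℕ) : Matrix (Fin d₁) (Fin d₂) ℂ :=
  if i = 0 then ket d₁ d₂ 0 0 - ket d₁ d₂ 1 2
  else if i < d₁ then ket d₁ d₂ i 0 - ket d₁ d₂ 0 i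
  else if i < d₂ then ket d₁ d₂ 0 i - ket d₁ d₂ 2 (i - 1)
  else fun _ _ => 1

def natEntry {m n : ℕ} {α : Type*} [Zero α] (E : Matrix (Fin m) (Fin n) α) (q s : ℕ) : α :=
  if hq : q < m then if hs : s < n then E ⟨q, hq⟩ ⟨s, hs⟩ else 0 else 0

lemma natEntry_fin {m n : ℕ} {α : Type*} [Zero α] (E : Matrix (Fin m) (Fin n) α)
    (a : Fin m) (b : Fin n) : natEntry E a b = E a b := by
  simp [natEntry]

lemma Fin.sum_univ_ite_val_eq {n : ℕ} {M : Type*} [AddCommMonoid M] (f : Fin n → M) (s : ℕ) :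
    ∑ b : Fin n, (if (b : ℕ) = s then f b else 0) = if h : s < n then f ⟨s, h⟩ else 0 := by
  split_ifs with h
  · rw [Finset.sum_eq_single ⟨s, h⟩]
    · simp
    · intro b _ hb; exact if_neg fun hbs => hb (Fin.ext hbs)
    · simp
  · exact Finset.sum_eq_zero fun b _ => if_neg (by omega)

section Pairing

variable {d₁ d₂ p : ℕ}

lemma trace_ket_mul_ket_mul (q r s : ℕ) (hp : p < d₁) (E : Matrix (Fin d₂) (Fin d₂) ℂ) :
    trace ((ket d₁ d₂ p q)ᴴ * (ket d₁ d₂ r s * Eᵀ)) = if p = r then natEntry E q s else 0 := by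
  simp only [trace, diag, mul_apply, conjTranspose_apply, ket, transpose_apply, ite_and]
  simp only [apply_ite (star : ℂ → ℂ), star_one, star_zero, ite_mul, one_mul, zero_mul,
    Fin.sum_univ_ite_val_eq, Finset.sum_dite_irrel, Finset.sum_const_zero]
  by_cases hpr : p = r
  · subst hpr
    simp [hp, natEntry, Fin.sum_univ_ite_val_eq]
  · simp [hpr]

lemma trace_ket_mul_allOnes_mul (q : ℕ) (hp : p < d₁) (E : Matrix (Fin d₂) (Fin d₂) ℂ) :
    trace ((ket d₁ d₂ p q)ᴴ * (of (fun _ _ => 1 : Fin d₁ → Fin d₂ → ℂ) * Eᵀ)) =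
      ∑ t : Fin d₂, natEntry E q t := by
  simp [trace, mul_apply, ket, ite_and, apply_ite (star : ℂ → ℂ), Fin.sum_univ_ite_val_eq, hp,
    natEntry]

end Pairing

def partnerRow (d₁ q : ℕ) : ℕ := if q = 0 then 1 else if q < d₁ then q else 2

def partnerCol (d₁ q : ℕ) : ℕ := if q = 0 then 2 else if q < d₁ then 0 else q - 1

noncomputable def partnerState (d₁ d₂ q : ℕ) : Matrix (Fin d₁) (Fin d₂) ℂ :=
  ket d₁ d₂ 0 q - ket d₁ d₂ (partnerRow d₁ q) (partnerCol d₁ q)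

section Partner

variable {d₁ d₂ q s : ℕ}

lemma partnerRow_pos : 0 < partnerRow d₁ q := by
  unfold partnerRow; split_ifs <;> omega

lemma partnerRow_lt (h : 3 ≤ d₁) : partnerRow d₁ q < d₁ := by
  unfold partnerRow; split_ifs <;> omega

lemma partnerCol_lt (h : 3 ≤ d₂) (hq : q < d₂) : partnerCol d₁ q < d₂ := by
  unfold partnerCol; split_ifs <;> omega

lemma partnerCol_lt_self (hq : q ≠ 0) : partnerCol d₁ q < q := by
  unfold partnerCol; split_ifs <;> omega

lemma partnerCol_ne_of_partnerRow_eq (hr : partnerRow d₁ q = partnerRow d₁ s) (hne : q ≠ s) :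
    partnerCol d₁ q ≠ partnerCol d₁ s := by
  unfold partnerRow at hr; unfold partnerCol; split_ifs at hr ⊢ <;> omega

lemma stateD12_eq_partnerState_or_neg (hq : q < d₂) :
    stateD12 d₁ d₂ q = partnerState d₁ d₂ q ∨ stateD12 d₁ d₂ q = -partnerState d₁ d₂ q := by
  unfold stateD12 partnerState partnerRow partnerCol
  split_ifs <;> simp_all

lemma stateD12_self (h : d₁ ≤ d₂) (h0 : d₂ ≠ 0) : stateD12 d₁ d₂ d₂ = of fun _ _ => 1 := by
  simp [stateD12, h0, h.not_gt]
  rfl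

lemma trace_partnerState_mul_partnerState_mul (h : 3 ≤ d₁) (E : Matrix (Fin d₂) (Fin d₂) ℂ) :
    trace ((partnerState d₁ d₂ q)ᴴ * (partnerState d₁ d₂ s * Eᵀ)) =
      natEntry E q s + if partnerRow d₁ q = partnerRow d₁ s then
        natEntry E (partnerCol d₁ q) (partnerCol d₁ s) else 0 := by
  have h0 : 0 < d₁ := by omega
  simp only [partnerState, conjTranspose_sub, Matrix.sub_mul, Matrix.mul_sub, trace_sub,
    trace_ket_mul_ket_mul _ _ _ h0, trace_ket_mul_ket_mul _ _ _ (partnerRow_lt h),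
    partnerRow_pos.ne, partnerRow_pos.ne', if_true, if_false]
  ring

lemma trace_partnerState_mul_allOnes_mul (h : 3 ≤ d₁) (E : Matrix (Fin d₂) (Fin d₂) ℂ) :
    trace ((partnerState d₁ d₂ q)ᴴ * (of (fun _ _ => 1 : Fin d₁ → Fin d₂ → ℂ) * Eᵀ)) =
      ∑ t : Fin d₂, natEntry E q t - ∑ t : Fin d₂, natEntry E (partnerCol d₁ q) t := by
  simp only [partnerState, conjTranspose_sub, Matrix.sub_mul, trace_sub,
    trace_ket_mul_allOnes_mul _ (by omega : 0 < d₁), trace_ket_mul_allOnes_mul _ (partnerRow_lt h)]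

end Partner

section Combinatorics

variable {d₁ d₂ : ℕ} {e : ℕ → ℕ → ℂ}

theorem offDiag_eq_zero_of_partner_relation (h : 3 ≤ d₂)
    (he : ∀ q s, q < d₂ → s < d₂ → q ≠ s →
      e q s + (if partnerRow d₁ q = partnerRow d₁ s then e (partnerCol d₁ q) (partnerCol d₁ s)
        else 0) = 0) :
    ∀ q s, q < d₂ → s < d₂ → q ≠ s → e q s = 0 := by
  -- the pair `(0, 1)` is sent to `(2, 0)`, whose rows differ
  have h20 : e 2 0 = 0 := by
    simpa [partnerRow] using he 2 0 (by omega) (by omega) (by omega)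
  intro q
  induction q using Nat.strong_induction_on with
  | _ q ih =>
  intro s hq hs hne
  have key := he q s hq hs hne
  by_cases hr : partnerRow d₁ q = partnerRow d₁ s
  · have hpartner : e (partnerCol d₁ q) (partnerCol d₁ s) = 0 := by
      rcases eq_or_ne q 0 with rfl | hq0
      · have : partnerCol d₁ s = 0 := by
          unfold partnerRow at hr; unfold partnerCol; split_ifs at hr ⊢ <;> omega
        rwa [this]
      · exact ih _ (partnerCol_lt_self hq0) _ (partnerCol_lt h hq) (partnerCol_lt h hs)
          (partnerCol_ne_of_partnerRow_eq hr hne)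
    simpa [hr, hpartner] using key
  · simpa [hr] using key

theorem diag_eq_of_rowSum_eq (hoff : ∀ q s, q < d₂ → s < d₂ → q ≠ s → e q s = 0)
    (hrow : ∀ q < d₂, ∑ t : Fin d₂, e q t = ∑ t : Fin d₂, e (partnerCol d₁ q) t) :
    ∀ q < d₂, e q q = e 0 0 := by
  have hsum : ∀ q < d₂, ∑ t : Fin d₂, e q t = e q q := fun q hq => by
    rw [Finset.sum_eq_single_of_mem ⟨q, hq⟩ (Finset.mem_univ _)]
    intro t _ ht
    exact hoff q t hq t.is_lt fun h => ht (Fin.ext h.symm)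
  intro q
  induction q using Nat.strong_induction_on with
  | _ q ih =>
  intro hq
  rcases eq_or_ne q 0 with rfl | hq0
  · rfl
  have hc := partnerCol_lt_self (d₁ := d₁) hq0
  rw [← hsum q hq, hrow q hq, hsum _ (hc.trans hq), ih _ hc (hc.trans hq)]

end Combinatorics

theorem bob_trivial_d12 (d₁ d₂ : ℕ) (h1 : 3 ≤ d₁) (h2 : d₁ ≤ d₂)
    (E : Matrix (Fin d₂) (Fin d₂) ℂ)
    (hE : ∀ i j : ℕ, i ≤ d₂ → j ≤ d₂ → i ≠ j →
      Matrix.trace ((stateD12 d₁ d₂ i)ᴴ * (stateD12 d₁ d₂ j * Eᵀ)) = 0) :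
    ∃ c : ℂ, E = c • (1 : Matrix (Fin d₂) (Fin d₂) ℂ) := by
  have hoff := offDiag_eq_zero_of_partner_relation (d₁ := d₁) (d₂ := d₂) (e := natEntry E)
    (by omega) fun q s hq hs hne => by
      rw [← trace_partnerState_mul_partnerState_mul h1]
      rcases stateD12_eq_partnerState_or_neg (d₁ := d₁) hq with hq' | hq' <;>
      rcases stateD12_eq_partnerState_or_neg (d₁ := d₁) hs with hs' | hs' <;>
      simpa [hq', hs'] using hE q s hq.le hs.le hne
  have hdiag := diag_eq_of_rowSum_eq (d₁ := d₁) hoff fun q hq => by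
    rw [← sub_eq_zero, ← trace_partnerState_mul_allOnes_mul h1]
    have h := hE q d₂ hq.le le_rfl hq.ne
    rw [stateD12_self h2 (by omega)] at h
    rcases stateD12_eq_partnerState_or_neg (d₁ := d₁) hq with hq' | hq' <;> simpa [hq'] using h
  refine ⟨natEntry E 0 0, ?_⟩
  ext a b
  rcases eq_or_ne a b with rfl | hab
  · simpa [natEntry_fin] using hdiag a a.is_lt
  · simpa [natEntry_fin, one_apply_ne hab] using
      hoff a b a.is_lt b.is_lt (Fin.val_ne_of_ne hab)
end

section
/- Fix d ≥ 2 and n ≥ 3, and let ω = e^{2πi/n}. In (ℂ^d)^{⊗n}, the d+1 vectors |φ₀⟩ = |0⟩^{⊗n} − |1⟩^{⊗n}, |φᵢ⟩ = ∑_{k=0}^{n−1} ω^k · |0⟩^{⊗k} ⊗ |i⟩ ⊗ |0⟩^{⊗(n−1−k)} for 1 ≤ i ≤ d−1, and the stopper |S⟩ = (∑_{a=0}^{d−1}|a⟩)^{⊗n} are pairwise orthogonal. -/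
open Finset

/-- The `d+1` states of Theorem 3 in `(ℂ^d)^{⊗n}` (Eq. (6)), as coefficient
functions on multi-indices. Index `0` is `|0⟩^{⊗n} − |1⟩^{⊗n}`; index `i` with
`1 ≤ i ≤ d−1` is `∑_{k<n} ω^k |0⟩^{⊗k}⊗|i⟩⊗|0⟩^{⊗(n−1−k)}` where
`ω = exp(2πi/n)`; index `d` is the stopper `(∑_a |a⟩)^{⊗n}`. -/
noncomputable def stateN (d n : ℕ) (i : ℕ) : (Fin n → Fin d) → ℂ :=
  if i = 0 then
    fun x => (if ∀ l, (x l : ℕ) = 0 then 1 else 0) - (if ∀ l, (x l : ℕ) = 1 then 1 else 0)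
  else if i < d then
    fun x => ∑ k : Fin n, (Complex.exp (2 * Real.pi * Complex.I / n)) ^ (k : ℕ) *
      (if ∀ l, (x l : ℕ) = (if l = k then i else 0) then 1 else 0)
  else fun _ => 1

/-!
The stopper is the all-ones vector, so orthogonality to it means that the coefficients of the
other states sum to zero: for `|φ₀⟩` this is `1 - 1`, for `|φᵢ⟩` it is `∑_k ω^k = 0`.
Any two of `|φ₀⟩, …, |φ_{d-1}⟩` have disjoint supports: `|φᵢ⟩` lives on the multi-indices with
a single nonzero entry, equal to `i`, while `|φ₀⟩` lives on the constant multi-indices `0…0` and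
`1…1`, which have no such entry as soon as `n ≥ 2`.
-/

section InnerSum

variable {ι : Type*} [Fintype ι] {f g : ι → ℂ}

theorem sum_conj_mul_eq_zero_comm (h : ∑ x, starRingEnd ℂ (f x) * g x = 0) :
    ∑ x, starRingEnd ℂ (g x) * f x = 0 := by
  have hconj : ∑ x, starRingEnd ℂ (g x) * f x =
      starRingEnd ℂ (∑ x, starRingEnd ℂ (f x) * g x) := by
    simp only [map_sum, map_mul, Complex.conj_conj, mul_comm]
  rw [hconj, h, map_zero]

theorem sum_conj_mul_eq_zero_of_disjoint (h : ∀ x, f x = 0 ∨ g x = 0) :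
    ∑ x, starRingEnd ℂ (f x) * g x = 0 :=
  sum_eq_zero fun x _ => by rcases h x with hf | hg <;> simp [*]

end InnerSum

theorem sum_ite_forall_val_eq_one (d n : ℕ) (p : Fin n → ℕ) (hp : ∀ l, p l < d) :
    ∑ x : Fin n → Fin d, (if ∀ l, (x l : ℕ) = p l then (1 : ℂ) else 0) = 1 := by
  have key : ∀ x : Fin n → Fin d, (∀ l, (x l : ℕ) = p l) ↔ x = fun l => ⟨p l, hp l⟩ :=
    fun x => ⟨fun h => funext fun l => Fin.ext (h l), fun h l => h ▸ rfl⟩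
  simp only [key, sum_ite_eq', mem_univ, if_true]

theorem sum_pow_exp_two_pi_I_div_eq_zero (n : ℕ) (hn : 2 ≤ n) :
    ∑ k : Fin n, Complex.exp (2 * Real.pi * Complex.I / n) ^ (k : ℕ) = 0 := by
  rw [Fin.sum_univ_eq_sum_range]
  exact (Complex.isPrimitiveRoot_exp n (by omega)).geom_sum_eq_zero (by omega)

namespace stateN

variable {d n : ℕ}

theorem zero_apply (x : Fin n → Fin d) :
    stateN d n 0 x =
      (if ∀ l, (x l : ℕ) = 0 then 1 else 0) - (if ∀ l, (x l : ℕ) = 1 then 1 else 0) := by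
  simp [stateN]

theorem apply_of_ne_zero_of_lt {i : ℕ} (hi : i ≠ 0) (hid : i < d) (x : Fin n → Fin d) :
    stateN d n i x = ∑ k : Fin n, Complex.exp (2 * Real.pi * Complex.I / n) ^ (k : ℕ) *
      (if ∀ l, (x l : ℕ) = (if l = k then i else 0) then 1 else 0) := by
  simp [stateN, hi, hid]

theorem self_apply (hd : d ≠ 0) (x : Fin n → Fin d) : stateN d n d x = 1 := by
  simp [stateN, hd]

theorem const_of_zero_apply_ne_zero {x : Fin n → Fin d} (h : stateN d n 0 x ≠ 0) :
    (∀ l, (x l : ℕ) = 0) ∨ ∀ l, (x l : ℕ) = 1 := by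
  contrapose! h
  rw [zero_apply, if_neg (not_forall.2 h.1), if_neg (not_forall.2 h.2), sub_zero]

theorem exists_single_of_apply_ne_zero {i : ℕ} (hi : i ≠ 0) (hid : i < d)
    {x : Fin n → Fin d} (h : stateN d n i x ≠ 0) :
    ∃ k, ∀ l, (x l : ℕ) = if l = k then i else 0 := by
  by_contra! hx
  refine h (?_ : stateN d n i x = 0)
  rw [apply_of_ne_zero_of_lt hi hid]
  exact sum_eq_zero fun k _ => by simp [hx k]

theorem sum_apply_eq_zero (hd : 2 ≤ d) (hn : 2 ≤ n) {i : ℕ} (hid : i < d) :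
    ∑ x : Fin n → Fin d, stateN d n i x = 0 := by
  rcases eq_or_ne i 0 with rfl | hi
  · simp only [zero_apply, sum_sub_distrib]
    rw [sum_ite_forall_val_eq_one d n _ fun _ => by omega,
      sum_ite_forall_val_eq_one d n _ fun _ => by omega, sub_self]
  · simp only [apply_of_ne_zero_of_lt hi hid]
    rw [sum_comm]
    simp only [← mul_sum]
    refine (Finset.sum_congr rfl fun k _ => ?_).trans (sum_pow_exp_two_pi_I_div_eq_zero n hn)
    rw [sum_ite_forall_val_eq_one d n (fun l => if l = k then i else 0)
      (fun l => by split_ifs <;> omega), mul_one]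

theorem apply_eq_zero_or_apply_eq_zero (hn : 2 ≤ n) {i j : ℕ} (hij : i < j) (hjd : j < d)
    (x : Fin n → Fin d) : stateN d n i x = 0 ∨ stateN d n j x = 0 := by
  by_contra! h
  obtain ⟨k, hk⟩ := exists_single_of_apply_ne_zero (by omega) hjd h.2
  rcases eq_or_ne i 0 with rfl | hi
  · have : Nontrivial (Fin n) := Fin.nontrivial_iff_two_le.mpr hn
    obtain ⟨l, hl⟩ := exists_ne k
    rcases const_of_zero_apply_ne_zero h.1 with hx | hx
    · have := hk k; rw [hx k, if_pos rfl] at this; omega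
    · have := hk l; rw [hx l, if_neg hl] at this; omega
  · obtain ⟨k', hk'⟩ := exists_single_of_apply_ne_zero hi (hij.trans hjd) h.1
    have := hk' k
    rw [hk k, if_pos rfl] at this
    split_ifs at this <;> omega

end stateN

theorem statesN_pairwise_orthogonal (d n : ℕ) (hd : 2 ≤ d) (hn : 3 ≤ n) :
    ∀ i j : ℕ, i ≤ d → j ≤ d → i ≠ j →
      ∑ x : Fin n → Fin d, (starRingEnd ℂ) (stateN d n i x) * stateN d n j x = 0 := by
  intro i j hi hj hij
  wlog hlt : i < j generalizing i j
  · exact sum_conj_mul_eq_zero_comm (this j i hj hi hij.symm (by omega))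
  rcases hj.eq_or_lt with rfl | hjd
  · simp only [stateN.self_apply (by omega : j ≠ 0), mul_one]
    rw [← map_sum, stateN.sum_apply_eq_zero hd (by omega) hlt, map_zero]
  · exact sum_conj_mul_eq_zero_of_disjoint
      (stateN.apply_eq_zero_or_apply_eq_zero (by omega) hlt hjd)
end

section
/- Fix d ≥ 2 and n ≥ 3, let ω = e^{2πi/n}, and fix a party index k₀ ∈ {1,…,n}. Represent vectors in (ℂ^d)^{⊗n} as coefficient functions on multi-indices, and for a d×d matrix E let E^{(k₀)} act on the k₀-th tensor factor. Let S be the set {|0⟩^{⊗n} − |1⟩^{⊗n}} ∪ {∑_{k=0}^{n−1} ω^k |0⟩^{⊗k}⊗|i⟩⊗|0⟩^{⊗(n−1−k)} : 1 ≤ i ≤ d−1} ∪ {(∑_{a=0}^{d−1}|a⟩)^{⊗n}}. If ⟨ψ| E^{(k₀)} |φ⟩ = 0 for all distinct ψ, φ ∈ S, then E = c·I for some c ∈ ℂ. -/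
/-!
Let `|W_a⟩` (`1 ≤ a < d`) be the `ω`-weighted single-excitation states. Pairing the GHZ-type
state with `|W_b⟩` under `E^{(k₀)}` isolates `E 0 b`, and `|W_a⟩` with the GHZ-type state
isolates `E a 0`: the `|1…1⟩` component never contributes, because `E^{(k₀)}` changes only party
`k₀` and a single-excitation configuration differs from `1…1` at a third party. Pairing `|W_a⟩`
with `|W_b⟩` isolates `E a b`, since only an excitation at party `k₀` can be moved. Hence `E` is
diagonal. Pairing `|W_a⟩` with the all-ones state gives `ω̄^{k₀}` times the difference of the
row sums of `a` and `0`, the other terms carrying the factor `∑ₖ ω̄^k = 0`; so the diagonal is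
constant.
-/

open Finset

open Function Matrix

theorem Matrix.IsDiag.eq_smul_one_of_rowSum_eq {α R : Type*} [Fintype α] [DecidableEq α]
    [Semiring R] {E : Matrix α α R} (hE : E.IsDiag) (o : α)
    (h : ∀ a, ∑ b, E a b = ∑ b, E o b) : E = E o o • 1 := by
  have hrow : ∀ a, ∑ b, E a b = E a a := fun a =>
    sum_eq_single a (fun b _ hb => hE hb.symm) (by simp)
  ext a b
  by_cases hab : a = b
  · subst hab
    simp [← hrow, h]
  · simp [hab, hE hab]

section

variable {ι α : Type*} [DecidableEq ι]

def excite (o : α) (k : ι) (a : α) : ι → α := update (fun _ => o) k a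

theorem excite_eq_const_off_iff {o a : α} (ha : a ≠ o) (k k₀ : ι) :
    (∀ l ≠ k₀, excite o k a l = o) ↔ k = k₀ := by
  constructor
  · intro h
    by_contra hk
    exact ha (by simpa [excite] using h k hk)
  · rintro rfl l hl
    simp [excite, hl]

theorem excite_ne_const_off {o u a : α} (hu : u ≠ o) (hι : 3 ≤ ENat.card ι) (k k₀ : ι) :
    ¬ ∀ l ≠ k₀, excite o k a l = u := by
  intro h
  obtain ⟨m, hmk₀, hmk⟩ := ENat.exists_ne_ne_of_three_le hι k₀ k
  simpa [excite, hmk, hu.symm] using h m hmk₀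

theorem excite_eq_excite_off_iff {o a b : α} (ha : a ≠ o) (hb : b ≠ o) (hab : a ≠ b)
    (k k' k₀ : ι) : (∀ l ≠ k₀, excite o k a l = excite o k' b l) ↔ k = k₀ ∧ k' = k₀ := by
  constructor
  · intro h
    have hk : k = k₀ := by
      by_contra hk
      have := h k hk
      by_cases hkk' : k = k'
      · subst hkk'; simp [excite, hab] at this
      · simp [excite, hkk', ha] at this
    subst hk
    refine ⟨rfl, ?_⟩
    by_contra hk'
    have := h k' hk'
    simp [excite, hk', hb.symm] at this
  · rintro ⟨rfl, rfl⟩ l hl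
    simp [excite, hl]

variable [Fintype α]

/-- The operator `E^{(k)}` of the paper: `E` acting on the `k`-th tensor factor. -/
def partyOp (E : Matrix α α ℂ) (k : ι) : ((ι → α) → ℂ) →ₗ[ℂ] (ι → α) → ℂ where
  toFun φ x := ∑ b, E (x k) b * φ (update x k b)
  map_add' φ ψ := by ext x; simp [mul_add, sum_add_distrib]
  map_smul' c φ := by ext x; simp [mul_sum, mul_left_comm]

theorem partyOp_apply (E : Matrix α α ℂ) (k : ι) (φ : (ι → α) → ℂ) (x : ι → α) :
    partyOp E k φ x = ∑ b, E (x k) b * φ (update x k b) := rfl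

variable [Fintype ι] [DecidableEq α]

theorem partyOp_single_apply (E : Matrix α α ℂ) (k : ι) (y x : ι → α) :
    partyOp E k (Pi.single y 1) x = if ∀ l ≠ k, x l = y l then E (x k) (y k) else 0 := by
  simp only [partyOp_apply, Pi.single_apply, update_eq_iff, mul_ite, mul_one, mul_zero]
  split_ifs with h
  · simp only [and_iff_left h, sum_ite_eq', mem_univ, if_true]
  · simp only [h, and_false, if_false, sum_const_zero]

theorem star_single_dotProduct (y : ι → α) (v : (ι → α) → ℂ) :
    star (Pi.single y (1 : ℂ)) ⬝ᵥ v = v y := by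
  simp [single_dotProduct]

def ghzState (o u : α) : (ι → α) → ℂ := Pi.single (fun _ => o) 1 - Pi.single (fun _ => u) 1

def wState (o : α) (w : ι → ℂ) (a : α) : (ι → α) → ℂ := ∑ k, w k • Pi.single (excite o k a) 1

theorem star_ghzState_dotProduct (o u : α) (v : (ι → α) → ℂ) :
    star (ghzState o u) ⬝ᵥ v = v (fun _ => o) - v (fun _ => u) := by
  simp only [ghzState, star_sub, sub_dotProduct, star_single_dotProduct]

theorem star_wState_dotProduct (o : α) (w : ι → ℂ) (a : α) (v : (ι → α) → ℂ) :
    star (wState o w a) ⬝ᵥ v = ∑ k, star (w k) * v (excite o k a) := by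
  simp only [wState, star_sum, star_smul, sum_dotProduct, smul_dotProduct,
    star_single_dotProduct, smul_eq_mul]

theorem partyOp_wState_apply (E : Matrix α α ℂ) (k₀ : ι) (o : α) (w : ι → ℂ) (a : α)
    (x : ι → α) :
    partyOp E k₀ (wState o w a) x = ∑ k, w k * partyOp E k₀ (Pi.single (excite o k a) 1) x := by
  simp [wState, map_sum, map_smul]

variable {E : Matrix α α ℂ} {k₀ : ι} {o : α} {w : ι → ℂ}

theorem star_ghzState_dotProduct_partyOp_wState {u b : α} (hι : 3 ≤ ENat.card ι)
    (hu : u ≠ o) (hb : b ≠ o) :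
    star (ghzState o u) ⬝ᵥ partyOp E k₀ (wState o w b) = w k₀ * E o b := by
  simp only [star_ghzState_dotProduct, partyOp_wState_apply, partyOp_single_apply,
    eq_comm (a := o), eq_comm (a := u), excite_eq_const_off_iff hb,
    excite_ne_const_off hu hι, if_false, mul_zero, sum_const_zero, sub_zero, mul_ite]
  simp [excite]

theorem star_wState_dotProduct_partyOp_ghzState {u a : α} (hι : 3 ≤ ENat.card ι)
    (hu : u ≠ o) (ha : a ≠ o) :
    star (wState o w a) ⬝ᵥ partyOp E k₀ (ghzState o u) = star (w k₀) * E a o := by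
  simp only [star_wState_dotProduct, ghzState, map_sub, Pi.sub_apply, partyOp_single_apply,
    excite_eq_const_off_iff ha, excite_ne_const_off hu hι, if_false, sub_zero, mul_ite,
    mul_zero]
  simp [excite]

theorem star_wState_dotProduct_partyOp_wState {a b : α} (ha : a ≠ o) (hb : b ≠ o)
    (hab : a ≠ b) :
    star (wState o w a) ⬝ᵥ partyOp E k₀ (wState o w b) = star (w k₀) * w k₀ * E a b := by
  simp only [star_wState_dotProduct, partyOp_wState_apply, partyOp_single_apply,
    excite_eq_excite_off_iff ha hb hab, mul_ite, mul_zero]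
  simp [excite, ite_and, mul_assoc]

theorem star_wState_dotProduct_partyOp_one {a : α} (hw : ∑ k, w k = 0) :
    star (wState o w a) ⬝ᵥ partyOp E k₀ 1 = star (w k₀) * (∑ b, E a b - ∑ b, E o b) := by
  have hrow : ∀ k, ∑ b, E (excite o k a k₀) b
      = ∑ b, E o b + if k = k₀ then ∑ b, E a b - ∑ b, E o b else 0 := by
    intro k
    by_cases hk : k = k₀
    · simp [excite, hk]
    · simp [excite, hk, Ne.symm hk]
  have hw' : ∑ k, star (w k) = 0 := by rw [← star_sum, hw, star_zero]
  simp only [star_wState_dotProduct, partyOp_apply, Pi.one_apply, mul_one, hrow, mul_add,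
    sum_add_distrib, ← sum_mul, hw', zero_mul, zero_add, mul_ite, mul_zero, sum_ite_eq',
    mem_univ, if_true]

theorem eq_smul_one_of_forall_dotProduct_partyOp_eq_zero {u : α} (hι : 3 ≤ ENat.card ι)
    (hu : u ≠ o) (hw : w k₀ ≠ 0) (hw_sum : ∑ k, w k = 0)
    (hghz_w : ∀ b ≠ o, star (ghzState o u) ⬝ᵥ partyOp E k₀ (wState o w b) = 0)
    (hw_ghz : ∀ a ≠ o, star (wState o w a) ⬝ᵥ partyOp E k₀ (ghzState o u) = 0)
    (hw_w : ∀ a b, a ≠ o → b ≠ o → a ≠ b →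
      star (wState o w a) ⬝ᵥ partyOp E k₀ (wState o w b) = 0)
    (hw_one : ∀ a ≠ o, star (wState o w a) ⬝ᵥ partyOp E k₀ 1 = 0) :
    E = E o o • 1 := by
  have hdiag : E.IsDiag := by
    intro a b hab
    rcases eq_or_ne a o with rfl | ha
    · simpa [star_ghzState_dotProduct_partyOp_wState hι hu hab.symm, hw] using
        hghz_w b hab.symm
    rcases eq_or_ne b o with rfl | hb
    · simpa [star_wState_dotProduct_partyOp_ghzState hι hu ha, hw] using hw_ghz a ha
    · simpa [star_wState_dotProduct_partyOp_wState ha hb hab, hw] using hw_w a b ha hb hab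
  refine hdiag.eq_smul_one_of_rowSum_eq o fun a => ?_
  rcases eq_or_ne a o with rfl | ha
  · rfl
  · simpa [star_wState_dotProduct_partyOp_one hw_sum, hw, sub_eq_zero] using hw_one a ha

end

theorem stateN_zero (d n : ℕ) [NeZero d] (hd : 1 < d) : stateN d n 0 = ghzState 0 ⟨1, hd⟩ := by
  rw [stateN, if_pos rfl]
  ext x
  have h0 : (∀ l, (x l : ℕ) = 0) ↔ x = fun _ => 0 := by
    simp only [funext_iff, Fin.ext_iff, Fin.val_zero]
  have h1 : (∀ l, (x l : ℕ) = 1) ↔ x = fun _ => ⟨1, hd⟩ := by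
    simp only [funext_iff, Fin.ext_iff]
  simp only [ghzState, Pi.sub_apply, Pi.single_apply, h0, h1]

theorem stateN_of_ne_zero (d n : ℕ) [NeZero d] (a : Fin d) (ha : a ≠ 0) :
    stateN d n a =
      wState 0 (fun k : Fin n => Complex.exp (2 * Real.pi * Complex.I / n) ^ (k : ℕ)) a := by
  have ha' : (a : ℕ) ≠ 0 := fun h => ha (Fin.ext h)
  rw [stateN, if_neg ha', if_pos a.isLt]
  ext x
  have hx : ∀ k, (∀ l, (x l : ℕ) = if l = k then (a : ℕ) else 0) ↔ x = excite 0 k a := by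
    intro k
    simp only [funext_iff, Fin.ext_iff, excite, update_apply]
    refine forall_congr' fun l => ?_
    split_ifs <;> simp
  simp only [wState, Finset.sum_apply, Pi.smul_apply, Pi.single_apply, hx, smul_eq_mul]

theorem stateN_self (d n : ℕ) [NeZero d] : stateN d n d = 1 := by
  rw [stateN, if_neg (NeZero.ne d), if_neg (lt_irrefl d)]
  rfl

theorem party_trivial_N (d n : ℕ) (hd : 2 ≤ d) (hn : 3 ≤ n) (k₀ : Fin n)
    (E : Matrix (Fin d) (Fin d) ℂ)
    (hE : ∀ i j : ℕ, i ≤ d → j ≤ d → i ≠ j →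
      ∑ x : Fin n → Fin d, (starRingEnd ℂ) (stateN d n i x) *
        (∑ b : Fin d, E (x k₀) b * stateN d n j (Function.update x k₀ b)) = 0) :
    ∃ c : ℂ, E = c • (1 : Matrix (Fin d) (Fin d) ℂ) := by
  have : NeZero d := ⟨by omega⟩
  set ω := Complex.exp (2 * Real.pi * Complex.I / n)
  have hω : IsPrimitiveRoot ω n := Complex.isPrimitiveRoot_exp n (by omega)
  have hpair : ∀ i j, i ≤ d → j ≤ d → i ≠ j →
      star (stateN d n i) ⬝ᵥ partyOp E k₀ (stateN d n j) = 0 := hE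
  refine ⟨E 0 0, eq_smul_one_of_forall_dotProduct_partyOp_eq_zero (k₀ := k₀) (u := ⟨1, hd⟩)
    (w := fun k : Fin n => ω ^ (k : ℕ)) (by simpa using hn) (Fin.ne_of_val_ne one_ne_zero)
    (pow_ne_zero _ (Complex.exp_ne_zero _)) ?_ ?_ ?_ ?_ ?_⟩
  · rw [Fin.sum_univ_eq_sum_range (ω ^ ·) n]
    exact hω.geom_sum_eq_zero (by omega)
  · intro b hb
    rw [← stateN_zero d n hd, ← stateN_of_ne_zero d n b hb]
    exact hpair 0 b (Nat.zero_le _) b.isLt.le (Fin.val_ne_zero_iff.mpr hb).symm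
  · intro a ha
    rw [← stateN_zero d n hd, ← stateN_of_ne_zero d n a ha]
    exact hpair a 0 a.isLt.le (Nat.zero_le _) (Fin.val_ne_zero_iff.mpr ha)
  · intro a b ha hb hab
    rw [← stateN_of_ne_zero d n a ha, ← stateN_of_ne_zero d n b hb]
    exact hpair a b a.isLt.le b.isLt.le (Fin.val_ne_of_ne hab)
  · intro a ha
    rw [← stateN_of_ne_zero d n a ha, ← stateN_self d n]
    exact hpair a d a.isLt.le le_rfl a.isLt.ne
end

section
/- Fix d ≥ 2 and n ≥ 2, let ω = e^{2πi/p} with p ≥ 2, and let |φ⟩ = ∑_{t=0}^{p−1} ω^t |i₁^t⟩⊗⋯⊗|iₙ^t⟩ be a vector in (ℂ^d)^{⊗n} whose terms |i₁^t⟩⊗⋯⊗|iₙ^t⟩ are pairwise orthogonal. Fix k and suppose the k-th indices i_k^0, …, i_k^{p−1} take exactly two values u ≠ v, with the indices equal to u occurring precisely for t in an initial segment {0, 1, …, r−1} with 0 < r < p. Let |S⟩ = (∑_{a=0}^{d−1}|a⟩)^{⊗n} be the stopper state, and let E be a d×d complex matrix all of whose off-diagonal entries vanish. Then ⟨S| E^{(k)}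 |φ⟩ = 0 implies E_{u,u} = E_{v,v}. -/
/-!
Since `E` is diagonal, `⟨S| E^{(k)} |φ⟩ = ∑_t ω^t E_{i_k^t, i_k^t}`, which by the hypothesis on the
`k`-th indices equals `(∑_{t<r} ω^t) E_{u,u} + (∑_{r≤t<p} ω^t) E_{v,v}`. The two geometric sums add
up to `∑_{t<p} ω^t = 0`, so the expression is `(∑_{t<r} ω^t) (E_{u,u} - E_{v,v})`, and the first
factor is nonzero because `ω^r ≠ 1`.
-/

open Finset

theorem IsPrimitiveRoot.geom_sum_range_ne_zero {R : Type*} [CommRing R] {ζ : R} {p r : ℕ}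
    (hζ : IsPrimitiveRoot ζ p) (hr0 : 0 < r) (hrp : r < p) : ∑ t ∈ range r, ζ ^ t ≠ 0 := by
  intro hsum
  apply hζ.pow_ne_one_of_pos_of_lt hr0.ne' hrp
  rw [← sub_eq_zero, ← geom_sum_mul, hsum, zero_mul]

theorem IsPrimitiveRoot.eq_of_sum_pow_mul_ite_eq_zero {R : Type*} [CommRing R] [IsDomain R]
    {ζ : R} {p r : ℕ} (hζ : IsPrimitiveRoot ζ p) (hr0 : 0 < r) (hrp : r < p) {a b : R}
    (h : ∑ t ∈ range p, ζ ^ t * (if t < r then a else b) = 0) : a = b := by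
  have hsplit : ∑ t ∈ range p, ζ ^ t * (if t < r then a else b)
      = (∑ t ∈ range r, ζ ^ t) * a + (∑ t ∈ Ico r p, ζ ^ t) * b := by
    rw [← sum_range_add_sum_Ico _ hrp.le, sum_mul, sum_mul]
    congr 1
    · exact sum_congr rfl fun t ht => by rw [if_pos (mem_range.mp ht)]
    · exact sum_congr rfl fun t ht => by rw [if_neg (mem_Ico.mp ht).1.not_gt]
  have htotal : ∑ t ∈ range r, ζ ^ t + ∑ t ∈ Ico r p, ζ ^ t = 0 := by
    rw [sum_range_add_sum_Ico _ hrp.le]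
    exact hζ.geom_sum_eq_zero (by omega)
  have hfactor : (∑ t ∈ range r, ζ ^ t) * (a - b) = 0 := by
    linear_combination h - hsplit - b * htotal
  exact sub_eq_zero.mp ((mul_eq_zero.mp hfactor).resolve_left (geom_sum_range_ne_zero hζ hr0 hrp))

theorem Matrix.IsDiag.sum_mul_eq {α R : Type*} [Fintype α] [NonUnitalNonAssocSemiring R]
    {E : Matrix α α R} (hE : E.IsDiag) (a : α) (g : α → R) : ∑ b, E a b * g b = E a a * g a :=
  Fintype.sum_eq_single a fun b hb => by rw [hE hb.symm, zero_mul]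

theorem Fintype.sum_mul_sum_ite_eq {β γ R : Type*} [Fintype β] [DecidableEq β]
    [CommSemiring R] (c : β → R) (s : Finset γ) (w : γ → R) (y : γ → β) :
    ∑ x, c x * ∑ t ∈ s, w t * (if x = y t then 1 else 0) = ∑ t ∈ s, w t * c (y t) := by
  simp_rw [mul_sum, mul_ite, mul_one, mul_zero]
  rw [sum_comm]
  refine Finset.sum_congr rfl fun t _ => ?_
  rw [Fintype.sum_ite_eq', mul_comm]

theorem diagonal_entries_lemma_general (d n p : ℕ)
    (ι : ℕ → Fin n → Fin d)
    (k : Fin n) (u v : Fin d)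
    (r : ℕ) (hr0 : 0 < r) (hrp : r < p)
    (hind : ∀ t, t < p → ι t k = if t < r then u else v)
    (E : Matrix (Fin d) (Fin d) ℂ)
    (hoff : ∀ a b : Fin d, a ≠ b → E a b = 0)
    (h : ∑ x : Fin n → Fin d,
        (∑ b : Fin d, E (x k) b *
          (∑ t ∈ Finset.range p, (Complex.exp (2 * Real.pi * Complex.I / p)) ^ t *
            (if Function.update x k b = ι t then 1 else 0))) = 0) :
    E u u = E v v := by
  set ω : ℂ := Complex.exp (2 * Real.pi * Complex.I / p)
  have hω : IsPrimitiveRoot ω p := Complex.isPrimitiveRoot_exp p (hr0.trans hrp).ne'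
  have hE : E.IsDiag := hoff
  simp_rw [hE.sum_mul_eq, Function.update_eq_self, Fintype.sum_mul_sum_ite_eq] at h
  apply hω.eq_of_sum_pow_mul_ite_eq_zero hr0 hrp
  rw [← h]
  refine sum_congr rfl fun t ht => ?_
  rw [hind t (mem_range.mp ht)]
  split_ifs <;> rfl

theorem diagonal_entries_lemma (d n p : ℕ) (hd : 2 ≤ d) (hn : 2 ≤ n) (hp : 2 ≤ p)
    (ι : ℕ → Fin n → Fin d)
    (horth : ∀ t s, t < p → s < p → t ≠ s → ι t ≠ ι s)
    (k : Fin n) (u v : Fin d) (huv : u ≠ v)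
    (r : ℕ) (hr0 : 0 < r) (hrp : r < p)
    (hind : ∀ t, t < p → ι t k = if t < r then u else v)
    (E : Matrix (Fin d) (Fin d) ℂ)
    (hoff : ∀ a b : Fin d, a ≠ b → E a b = 0)
    (h : ∑ x : Fin n → Fin d,
        (∑ b : Fin d, E (x k) b *
          (∑ t ∈ Finset.range p, (Complex.exp (2 * Real.pi * Complex.I / p)) ^ t *
            (if Function.update x k b = ι t then 1 else 0))) = 0) :
    E u u = E v v :=
  diagonal_entries_lemma_general d n p ι k u v r hr0 hrp hind E hoff h
end
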